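/- A ground atom pq(i,cs,us,ds) is in the least Herbrand model of the pq program if and only if there exists k > 0 such that i is the k-th member of each of cs, us and ds. -/

import Mathlib

/-- Ground terms of the Herbrand universe: numerals built from `zero`/`succ`,
list constructors `cons`/`nil`, and infinitely many other constants `sym n`. -/
inductive Term : Type
  | zero : Term
  | succ : Term → Term
  | cons : Term → Term → Term
  | nil  : Term
  | sym  : ℕ → Term
deriving DecidableEq

/-- The numeral `sⁱ(0)` representing a natural number. -/
def num : ℕ → Term
  | 0 => Term.zero
  | n + 1 => Term.succ (num n)

/-- `NthMember k e t` : `e` is the `k`-th member (k ≥ 1) of the term `t`,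
i.e. `t = [e₁,…,e_{k-1}, e | t']`. -/
def NthMember : ℕ → Term → Term → Prop
  | 0, _, _ => False
  | 1, e, t => ∃ r, t = Term.cons e r
  | k + 2, e, t => ∃ h r, t = Term.cons h r ∧ NthMember (k + 1) e r

/-- `e` is a member of the term `t`. -/
def IsMember (e t : Term) : Prop := ∃ k, NthMember k e t

/-- `t` is a (proper, nil-terminated) list. -/
inductive IsList : Term → Prop
  | nil : IsList Term.nil
  | cons (h t : Term) : IsList t → IsList (Term.cons h t)

/-- The members of `cs` are pairwise distinct (no member occurs at two positions). -/
def DistinctMembers (cs : Term) : Prop :=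
  ∀ k1 k2 e, NthMember k1 e cs → NthMember k2 e cs → k1 = k2

/-- `(cs,us,ds)` represents a correct placement of queens `1,…,m`
in the context of row `i` (Definition 3 of the paper):
`cs` is a list of distinct members containing `1,…,m`; the up diagonal
numbers `k+j-i` and down diagonal numbers `k+i-j` of the queens `1,…,m`
(queen `j` being the `k`-th member of `cs`) are pairwise distinct; and every
positive such diagonal number `l` of queen `j` is reflected by `j` being the
`l`-th member of `us` (resp. `ds`). -/
def CorrectUpTo (m i : ℕ) (cs us ds : Term) : Prop :=
  m ≤ i ∧
  IsList cs ∧ DistinctMembers cs ∧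
  (∀ j, 1 ≤ j → j ≤ m → IsMember (num j) cs) ∧
  (∀ j1 j2 k1 k2, 1 ≤ j1 → j1 ≤ m → 1 ≤ j2 → j2 ≤ m →
     NthMember k1 (num j1) cs → NthMember k2 (num j2) cs →
     (k1 + j1 : ℤ) - i = (k2 + j2 : ℤ) - i → j1 = j2) ∧
  (∀ j1 j2 k1 k2, 1 ≤ j1 → j1 ≤ m → 1 ≤ j2 → j2 ≤ m →
     NthMember k1 (num j1) cs → NthMember k2 (num j2) cs →
     (k1 + i : ℤ) - j1 = (k2 + i : ℤ) - j2 → j1 = j2) ∧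
  (∀ j k (l : ℤ), 1 ≤ j → j ≤ m → NthMember k (num j) cs →
     (k + j : ℤ) - i = l → 0 < l → NthMember l.toNat (num j) us) ∧
  (∀ j k (l : ℤ), 1 ≤ j → j ≤ m → NthMember k (num j) cs →
     (k + i : ℤ) - j = l → 0 < l → NthMember l.toNat (num j) ds)

/-- Ground atoms of the n-queens program. -/
inductive Atom : Type
  | pq  (i cs us ds : Term)
  | pqs (i cs us ds : Term)
deriving DecidableEq

/-- A ground clause: a head together with the list of body atoms. -/
abbrev Clause := Atom × List Atom

/-- A (ground instantiation of a) definite program. -/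
abbrev Program := Set Clause

/-- `S` is an Herbrand model of `P`. -/
def IsModel (S : Set Atom) (P : Program) : Prop :=
  ∀ c ∈ P, (∀ b ∈ c.2, b ∈ S) → c.1 ∈ S

/-- The least Herbrand model of `P`. -/
def LHM (P : Program) : Set Atom := ⋂₀ {S | IsModel S P}

/-- A ground atom `A` is covered by program `P` w.r.t. specification `S`. -/
def Covered (P : Program) (S : Set Atom) (A : Atom) : Prop :=
  ∃ c ∈ P, c.1 = A ∧ ∀ b ∈ c.2, b ∈ S

/-- The set of ground instances of the two pq clauses:
`pq(I,[I|_],[I|_],[I|_])` and `pq(I,[_|Cs],[_|Us],[_|Ds]) ← pq(I,Cs,Us,Ds)`. -/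
def PQprog : Program :=
  {c | (∃ i x y z, c = (Atom.pq i (Term.cons i x) (Term.cons i y) (Term.cons i z), [])) ∨
       (∃ i c' cs u us d ds,
          c = (Atom.pq i (Term.cons c' cs) (Term.cons u us) (Term.cons d ds),
               [Atom.pq i cs us ds]))}

/-- The set of ground instances of the four clauses of NQUEENS. -/
def NQprog : Program :=
  {c | (∃ x y z, c = (Atom.pqs Term.zero x y z, [])) ∨
       (∃ i cs us u d ds,
          c = (Atom.pqs (Term.succ i) cs us (Term.cons d ds),
               [Atom.pqs i cs (Term.cons u us) ds, Atom.pq (Term.succ i) cs us ds])) ∨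
       (∃ i x y z, c = (Atom.pq i (Term.cons i x) (Term.cons i y) (Term.cons i z), [])) ∨
       (∃ i c' cs u us d ds,
          c = (Atom.pq i (Term.cons c' cs) (Term.cons u us) (Term.cons d ds),
               [Atom.pq i cs us ds]))}

/-- The specification `S_pq`. -/
def Spq : Set Atom :=
  {a | ∃ i cs us ds k, a = Atom.pq i cs us ds ∧ 0 < k ∧
       NthMember k i cs ∧ NthMember k i us ∧ NthMember k i ds}

/-- The correctness specification `S_pqs`. -/
def Spqs : Set Atom :=
  {a | (∃ cs us ds, a = Atom.pqs Term.zero cs us ds) ∨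
       (∃ i cs us t ds, 0 < i ∧ a = Atom.pqs (num i) cs us (Term.cons t ds) ∧
          (∀ j, 1 ≤ j → j ≤ i → IsMember (num j) cs) ∧
          (IsList cs → DistinctMembers cs → CorrectUpTo i i cs us ds))}

/-- The completeness specification `S⁰_pqs`. -/
def S0pqs : Set Atom :=
  {a | ∃ i cs us t ds, 0 < i ∧ a = Atom.pqs (num i) cs us (Term.cons t ds) ∧
        CorrectUpTo i i cs us ds}

/-- All atoms `pqs(0,cs,us,ds)`. -/
def SpqsZero : Set Atom :=
  {a | ∃ cs us ds, a = Atom.pqs Term.zero cs us ds}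

/-- The level mapping on ground terms: `|[h|t]| = 1+|t|`, `|s(t)| = 1+|t|`,
`|f(…)| = 0` otherwise. -/
def tlvl : Term → ℕ
  | Term.cons _ t => 1 + tlvl t
  | Term.succ t => 1 + tlvl t
  | _ => 0

/-- The level mapping on ground atoms. -/
def alvl : Atom → ℕ
  | Atom.pqs i cs _ _ => tlvl i + tlvl cs
  | Atom.pq _ cs _ _ => tlvl cs

/-- `t` is a list of length `n`. -/
inductive IsListLen : Term → ℕ → Prop
  | nil : IsListLen Term.nil 0
  | cons (h t : Term) (n : ℕ) : IsListLen t n → IsListLen (Term.cons h t) (n + 1)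

/-! The least Herbrand model of the pq program is exactly `Spq`: `Spq` is a model (a fact puts
`i` first in all three lists, and the recursive clause shifts a common position by one), and
conversely an atom of `Spq` with common position `k` is derived by `k - 1` uses of the recursive
clause on top of a fact. -/

lemma NthMember.pos {k : ℕ} {e t : Term} (h : NthMember k e t) : 0 < k :=
  Nat.pos_of_ne_zero (by rintro rfl; exact h)

lemma nthMember_succ_iff {k : ℕ} (hk : 0 < k) {e t : Term} :
    NthMember (k + 1) e t ↔ ∃ h r, t = Term.cons h r ∧ NthMember k e r := by
  obtain ⟨k, rfl⟩ := Nat.exists_eq_add_of_lt hk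
  exact Iff.rfl

lemma nthMember_cons_succ {k : ℕ} {e t : Term} (h : NthMember k e t) (x : Term) :
    NthMember (k + 1) e (Term.cons x t) :=
  (nthMember_succ_iff h.pos).2 ⟨x, t, rfl, h⟩

lemma isModel_LHM (P : Program) : IsModel (LHM P) P :=
  fun c hc hbody _ hS => hS c hc fun b hb => hbody b hb _ hS

lemma LHM_subset_of_isModel {S : Set Atom} {P : Program} (hS : IsModel S P) : LHM P ⊆ S :=
  Set.sInter_subset_of_mem hS

lemma pq_mem_Spq_iff {i cs us ds : Term} :
    Atom.pq i cs us ds ∈ Spq ↔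
      ∃ k, 0 < k ∧ NthMember k i cs ∧ NthMember k i us ∧ NthMember k i ds := by
  constructor
  · rintro ⟨_, _, _, _, k, ⟨⟩, hk, hc, hu, hd⟩
    exact ⟨k, hk, hc, hu, hd⟩
  · rintro ⟨k, hk, hc, hu, hd⟩
    exact ⟨i, cs, us, ds, k, rfl, hk, hc, hu, hd⟩

lemma isModel_Spq : IsModel Spq PQprog := by
  rintro c (⟨i, x, y, z, rfl⟩ | ⟨i, c, cs, u, us, d, ds, rfl⟩) hbody
  · exact pq_mem_Spq_iff.2 ⟨1, one_pos, ⟨x, rfl⟩, ⟨y, rfl⟩, ⟨z, rfl⟩⟩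
  · obtain ⟨k, -, hc, hu, hd⟩ := pq_mem_Spq_iff.1 (hbody _ (List.mem_singleton_self _))
    exact pq_mem_Spq_iff.2 ⟨k + 1, k.succ_pos, nthMember_cons_succ hc c,
      nthMember_cons_succ hu u, nthMember_cons_succ hd d⟩

lemma Spq_subset_LHM_PQprog : Spq ⊆ LHM PQprog := by
  rintro _ ⟨i, cs, us, ds, k, rfl, hk, hc, hu, hd⟩
  induction k, hk using Nat.le_induction generalizing cs us ds with
  | base =>
    obtain ⟨x, rfl⟩ := hc
    obtain ⟨y, rfl⟩ := hu
    obtain ⟨z, rfl⟩ := hd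
    exact isModel_LHM PQprog _ (Or.inl ⟨i, x, y, z, rfl⟩) (by simp)
  | succ k hk ih =>
    obtain ⟨c, cs', rfl, hc'⟩ := (nthMember_succ_iff hk).1 hc
    obtain ⟨u, us', rfl, hu'⟩ := (nthMember_succ_iff hk).1 hu
    obtain ⟨d, ds', rfl, hd'⟩ := (nthMember_succ_iff hk).1 hd
    refine isModel_LHM PQprog _ (Or.inr ⟨i, c, cs', u, us', d, ds', rfl⟩) ?_
    simpa using ih cs' us' ds' hc' hu' hd'

lemma LHM_PQprog_eq_Spq : LHM PQprog = Spq :=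
  (LHM_subset_of_isModel isModel_Spq).antisymm Spq_subset_LHM_PQprog

/-- A ground atom `pq(i,cs,us,ds)` is in the least Herbrand model of the pq
program iff for some `k > 0`, `i` is the `k`-th member of each of
`cs`, `us`, `ds`. -/
theorem pq_LHM_iff (i cs us ds : Term) :
    Atom.pq i cs us ds ∈ LHM PQprog ↔
      ∃ k, 0 < k ∧ NthMember k i cs ∧ NthMember k i us ∧ NthMember k i ds := by
  rw [LHM_PQprog_eq_Spq, pq_mem_Spq_iff]
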